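/- arXiv:1302.7227 — 8 statements merged into one kernel-verified Lean document; each statement's English description precedes it below -/
import Mathlib

section
/- Let N ≥ 1 be an integer and suppose f : ℕ → ℝ satisfies f(0) = 1, f(x) = s·p·f(x+1) + s·(1-p)·f(x-1) for all integers 1 ≤ x ≤ N-1, and f(N) = s·f(N-1). If D := χ^{2N-1}(χ - s) + ξ^{N-1}(sχ - ξ) ≠ 0, then f(1) = (ξ·χ^{2N-2}(χ - s) + ξ^{N-1}·χ·(sχ - ξ)) / D. -/
open Real

/-!
On `{0, …, N}` the equation `f x = s p f (x+1) + s (1-p) f (x-1)` is a second-order linear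
recurrence with characteristic roots `χ` and `χ' = (1 - √Δ) / (2 s p)`, where
`Δ = 1 - 4 s² p (1-p) > 0`; so `χ ≠ χ'`, and `χ χ' = ξ` by Vieta. Hence
`f x = u χ^x + v χ'^x` with `u + v = f 0 = 1` and `u χ + v χ' = f 1`. The reflection
condition `f N = s f (N-1)` is one more linear equation in `u, v`; solving it, with `ξ`
written as `χ χ'`, gives `f 1`.
-/

section QuadraticRoots

variable {c d δ : ℝ}

theorem quadratic_root_of_sq_eq_discrim (hc : c ≠ 0) (hδ : δ ^ 2 = 1 - 4 * c * d) :
    c * ((1 + δ) / (2 * c)) ^ 2 - (1 + δ) / (2 * c) + d = 0 := by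
  field_simp
  linear_combination hδ

theorem quadratic_root_mul_root (hc : c ≠ 0) (hδ : δ ^ 2 = 1 - 4 * c * d) :
    (1 + δ) / (2 * c) * ((1 - δ) / (2 * c)) = d / c := by
  field_simp
  linear_combination -hδ

theorem quadratic_roots_ne (hc : c ≠ 0) (hδ : δ ≠ 0) :
    (1 + δ) / (2 * c) ≠ (1 - δ) / (2 * c) := by
  intro h
  field_simp at h
  exact hδ (by linarith)

end QuadraticRoots

section SecondOrderRecurrence

variable {c d : ℝ} {N : ℕ}

theorem eqOn_of_recurrence {f g : ℕ → ℝ} (hc : c ≠ 0)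
    (hf : ∀ x, x + 2 ≤ N → f (x + 1) = c * f (x + 2) + d * f x)
    (hg : ∀ x, x + 2 ≤ N → g (x + 1) = c * g (x + 2) + d * g x)
    (h0 : f 0 = g 0) (h1 : f 1 = g 1) : ∀ x ≤ N, f x = g x := by
  intro x
  induction x using Nat.strong_induction_on with
  | _ x ih =>
    match x with
    | 0 => exact fun _ => h0
    | 1 => exact fun _ => h1
    | x + 2 =>
      intro hx
      have e0 := ih x (by omega) (by omega)
      have e1 := ih (x + 1) (by omega) (by omega)
      exact mul_left_cancel₀ hc (by linear_combination hg x hx - hf x hx + e1 - d * e0)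

theorem pow_add_pow_recurrence {a b : ℝ} (ha : c * a ^ 2 - a + d = 0)
    (hb : c * b ^ 2 - b + d = 0) (u v : ℝ) (x : ℕ) :
    u * a ^ (x + 1) + v * b ^ (x + 1) =
      c * (u * a ^ (x + 2) + v * b ^ (x + 2)) + d * (u * a ^ x + v * b ^ x) := by
  linear_combination (-(u * a ^ x)) * ha - v * b ^ x * hb

theorem exists_eq_pow_add_pow_of_recurrence {a b : ℝ} {f : ℕ → ℝ} (hc : c ≠ 0)
    (ha : c * a ^ 2 - a + d = 0) (hb : c * b ^ 2 - b + d = 0) (hab : a ≠ b)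
    (hf : ∀ x, x + 2 ≤ N → f (x + 1) = c * f (x + 2) + d * f x) :
    ∃ u v : ℝ, ∀ x ≤ N, f x = u * a ^ x + v * b ^ x := by
  have hab' : a - b ≠ 0 := sub_ne_zero.2 hab
  refine ⟨(f 1 - b * f 0) / (a - b), (a * f 0 - f 1) / (a - b),
    eqOn_of_recurrence hc hf (fun x _ => pow_add_pow_recurrence ha hb _ _ x) ?_ ?_⟩
  · field_simp
    ring
  · field_simp
    ring

end SecondOrderRecurrence

theorem pow_add_pow_reflected_boundary {s u v a b : ℝ} (m : ℕ) (huv : u + v = 1)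
    (hE : u * a ^ (m + 1) + v * b ^ (m + 1) = s * (u * a ^ m + v * b ^ m)) :
    (u * a + v * b) * (a ^ (2 * m + 1) * (a - s) + (a * b) ^ m * (s * a - a * b)) =
      a * b * a ^ (2 * m) * (a - s) + (a * b) ^ m * a * (s * a - a * b) := by
  linear_combination a ^ (m + 1) * (a - b) * hE
    + (a ^ (2 * m + 1) * b * (a - s) + (a * b) ^ m * a ^ 2 * (s - b)) * huv

theorem stmt_0_general (s p : ℝ) (hs : 0 < s) (hp : 1/2 ≤ p)
    (hdisc : 4 * s^2 * p * (1 - p) < 1)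
    (ξ χ : ℝ) (hξ : ξ = (1 - p) / p)
    (hχ : χ = (1 + Real.sqrt (1 - 4 * s^2 * p * (1 - p))) / (2 * s * p))
    (N : ℕ) (hN : 1 ≤ N) (f : ℕ → ℝ)
    (h0 : f 0 = 1)
    (hrec : ∀ x : ℕ, 1 ≤ x → x ≤ N - 1 →
      f x = s * p * f (x + 1) + s * (1 - p) * f (x - 1))
    (hend : f N = s * f (N - 1))
    (hD : χ ^ (2*N - 1) * (χ - s) + ξ ^ (N - 1) * (s * χ - ξ) ≠ 0) :
    f 1 = (ξ * χ ^ (2*N - 2) * (χ - s) + ξ ^ (N - 1) * χ * (s * χ - ξ)) /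
      (χ ^ (2*N - 1) * (χ - s) + ξ ^ (N - 1) * (s * χ - ξ)) := by
  have hsp : s * p ≠ 0 := mul_ne_zero hs.ne' (by linarith)
  set δ := √(1 - 4 * s ^ 2 * p * (1 - p))
  have hδ : δ ^ 2 = 1 - 4 * (s * p) * (s * (1 - p)) := by
    rw [sq_sqrt (by linarith)]
    ring
  rw [mul_assoc] at hχ
  set χ' := (1 - δ) / (2 * (s * p))
  have hχroot : s * p * χ ^ 2 - χ + s * (1 - p) = 0 :=
    hχ ▸ quadratic_root_of_sq_eq_discrim hsp hδ
  have hχ'root : s * p * χ' ^ 2 - χ' + s * (1 - p) = 0 := by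
    have := quadratic_root_of_sq_eq_discrim hsp (δ := -δ) (by rwa [neg_sq])
    rwa [← sub_eq_add_neg] at this
  have hprod : χ * χ' = ξ := by
    rw [hχ, quadratic_root_mul_root hsp hδ, hξ, mul_div_mul_left _ _ hs.ne']
  have hne : χ ≠ χ' := hχ ▸ quadratic_roots_ne hsp (sqrt_pos.2 (by linarith)).ne'
  obtain ⟨u, v, hf⟩ := exists_eq_pow_add_pow_of_recurrence (N := N) hsp hχroot hχ'root hne
    fun x hx => by simpa using hrec (x + 1) (by omega) (by omega)
  have huv : u + v = 1 := by simpa [h0] using (hf 0 (Nat.zero_le _)).symm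
  obtain ⟨m, rfl⟩ : ∃ m, N = m + 1 := ⟨N - 1, by omega⟩
  have hE := hend
  rw [Nat.add_sub_cancel, hf _ le_rfl, hf m (by omega)] at hE
  simp only [show 2 * (m + 1) - 1 = 2 * m + 1 by omega, show 2 * (m + 1) - 2 = 2 * m by omega,
    Nat.add_sub_cancel, ← hprod] at hD ⊢
  rw [eq_div_iff hD, hf 1 hN, pow_one, pow_one]
  exact pow_add_pow_reflected_boundary m huv hE

/-- The hitting-time generating function of a random walk on `{0,…,N}` with
up-probability `p`, reflected at `N`, evaluated at the starting point `1`,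
is given by the explicit formula in terms of `ξ = (1-p)/p` and the larger root
`χ` of `s p λ² - λ + s(1-p) = 0`. -/
theorem stmt_0 (s p : ℝ) (hs : 0 < s) (hs1 : s ≤ 1) (hp : 1/2 ≤ p) (hp1 : p < 1)
    (hdisc : 4 * s^2 * p * (1 - p) < 1)
    (ξ χ : ℝ) (hξ : ξ = (1 - p) / p)
    (hχ : χ = (1 + Real.sqrt (1 - 4 * s^2 * p * (1 - p))) / (2 * s * p))
    (N : ℕ) (hN : 1 ≤ N) (f : ℕ → ℝ)
    (h0 : f 0 = 1)
    (hrec : ∀ x : ℕ, 1 ≤ x → x ≤ N - 1 →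
      f x = s * p * f (x + 1) + s * (1 - p) * f (x - 1))
    (hend : f N = s * f (N - 1))
    (hD : χ ^ (2*N - 1) * (χ - s) + ξ ^ (N - 1) * (s * χ - ξ) ≠ 0) :
    f 1 = (ξ * χ ^ (2*N - 2) * (χ - s) + ξ ^ (N - 1) * χ * (s * χ - ξ)) /
      (χ ^ (2*N - 1) * (χ - s) + ξ ^ (N - 1) * (s * χ - ξ)) :=
  stmt_0_general s p hs hp hdisc ξ χ hξ hχ N hN f h0 hrec hend hD
end

section
/- Fix β > 0. For each integer N large enough that g_N := β·log(N)/N lies in (0,1), set r_N = (1 + g_N)/(1 - g_N) and M_N = (r_N^{N-1} - 1)/g_N + r_N^{N-1}. Then lim_{N→∞} M_N · β·log(N) / N^{1+2β} = 1. -/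
open Filter Real Topology

/-!
Write `L = log r_N = log (1 + g_N) - log (1 - g_N) = 2 g_N + O(g_N²)`. Since `N g_N² → 0`,
`r_N^{N-1} = exp ((N - 1) L)` is asymptotic to `exp (2 N g_N) = N^{2β}`. Multiplying
`M_N` by `β log N = N g_N` gives `N ((1 + g_N) r_N^{N-1} - 1)`, so the normalised mean is
`(1 + g_N) r_N^{N-1} / N^{2β} - N^{-2β} → 1`.
-/

lemma abs_log_one_add_sub_log_one_sub_sub_le_of_nonneg {x : ℝ} (hx : 0 ≤ x) (hx2 : x ≤ 1 / 2) :
    |log (1 + x) - log (1 - x) - 2 * x| ≤ 2 * x ^ 2 := by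
  have h1 : 0 < 1 + x := by linarith
  have h2 : 0 < 1 - x := by linarith
  have up1 : log (1 + x) ≤ x := by linarith [log_le_sub_one_of_pos h1]
  have lo2 : x ≤ -log (1 - x) := by linarith [log_le_sub_one_of_pos h2]
  have up2 : -log (1 - x) ≤ x + 2 * x ^ 2 := by
    have hinv : (1 - x)⁻¹ ≤ 1 + x + 2 * x ^ 2 := by
      rw [inv_le_iff_one_le_mul₀ h2]; nlinarith
    linarith [one_sub_inv_le_log_of_pos h2]
  have lo1 : x - x ^ 2 ≤ log (1 + x) := by
    have hinv : (1 + x)⁻¹ ≤ 1 - x + x ^ 2 := by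
      rw [inv_le_iff_one_le_mul₀ h1]; nlinarith
    linarith [one_sub_inv_le_log_of_pos h1]
  rw [abs_le]; constructor <;> nlinarith

lemma abs_log_one_add_sub_log_one_sub_sub_le {x : ℝ} (hx : |x| ≤ 1 / 2) :
    |log (1 + x) - log (1 - x) - 2 * x| ≤ 2 * x ^ 2 := by
  rcases le_total 0 x with h | h
  · exact abs_log_one_add_sub_log_one_sub_sub_le_of_nonneg h (le_trans (le_abs_self x) hx)
  · have key := abs_log_one_add_sub_log_one_sub_sub_le_of_nonneg (neg_nonneg.2 h)
      (le_trans (neg_le_abs x) hx)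
    rw [neg_sq, sub_neg_eq_add, ← sub_eq_add_neg] at key
    rw [← abs_neg]
    convert key using 2
    ring

lemma tendsto_pow_log_div_natCast (k : ℕ) :
    Tendsto (fun n : ℕ => log n ^ k / n) atTop (𝓝 0) := by
  simpa [Function.comp_def] using (tendsto_pow_log_div_mul_add_atTop 1 0 k one_ne_zero).comp
    tendsto_natCast_atTop_atTop

lemma tendsto_one_add_div_one_sub_pow_div_exp {x : ℕ → ℝ} (hx : Tendsto x atTop (𝓝 0))
    (hx2 : Tendsto (fun n : ℕ => n * x n ^ 2) atTop (𝓝 0)) :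
    Tendsto (fun n : ℕ => ((1 + x n) / (1 - x n)) ^ (n - 1) / exp (2 * n * x n))
      atTop (𝓝 1) := by
  set L : ℕ → ℝ := fun n => log (1 + x n) - log (1 - x n)
  have hsmall : ∀ᶠ n in atTop, |x n| ≤ 1 / 2 :=
    hx.abs.eventually (eventually_le_nhds (by norm_num))
  have hL : Tendsto L atTop (𝓝 0) := by
    have hcont : ContinuousAt (fun t : ℝ => log (1 + t) - log (1 - t)) 0 :=
      ((continuousAt_const.add continuousAt_id).log (by norm_num)).sub
        ((continuousAt_const.sub continuousAt_id).log (by norm_num))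
    have h0 := hcont.tendsto
    simp only [add_zero, sub_zero, log_one, sub_self] at h0
    exact h0.comp hx
  have hrem : Tendsto (fun n : ℕ => n * (L n - 2 * x n)) atTop (𝓝 0) := by
    refine squeeze_zero_norm' ?_ (by simpa using hx2.const_mul 2)
    filter_upwards [hsmall] with n hn
    rw [norm_mul, Real.norm_natCast, Real.norm_eq_abs]
    calc (n : ℝ) * |L n - 2 * x n| ≤ n * (2 * x n ^ 2) :=
          mul_le_mul_of_nonneg_left (abs_log_one_add_sub_log_one_sub_sub_le hn) n.cast_nonneg
      _ = 2 * (n * x n ^ 2) := by ring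
  have hexp := (hrem.sub hL).rexp
  rw [sub_zero, exp_zero] at hexp
  refine hexp.congr' ?_
  filter_upwards [hsmall, eventually_ge_atTop 1] with n hn hn1
  obtain ⟨hlo, hhi⟩ := abs_le.1 hn
  have h1 : 0 < 1 + x n := by linarith
  have h2 : 0 < 1 - x n := by linarith
  rw [← exp_log (div_pos h1 h2), log_div h1.ne' h2.ne', ← exp_nat_mul, ← exp_sub,
    Nat.cast_sub hn1]
  push_cast
  congr 1
  ring

lemma mean_mul_log_div_rpow_eq {β n g R : ℝ} (hn : 0 < n) (hg : g = β * log n / n)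
    (hg0 : g ≠ 0) :
    ((R - 1) / g + R) * (β * log n) / n ^ (1 + 2 * β) =
      (1 + g) * R / exp (2 * n * g) - n ^ (-(2 * β)) := by
  have hlog : β * log n = g * n := by rw [hg]; field_simp
  have hexp : exp (2 * n * g) = n ^ (2 * β) := by
    rw [rpow_def_of_pos hn, mul_assoc, mul_comm n, ← hlog]; ring_nf
  rw [hlog, hexp, rpow_add hn, rpow_one, rpow_neg hn.le]
  have : n ^ (2 * β) ≠ 0 := (rpow_pos_of_pos hn _).ne'
  field_simp
  ring

/-- First-moment asymptotics `m(θ^N) ~ N^{1+2β}/(β log N)` for the mean hitting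
time of `0` of the drifted walk on `{0,…,N}` with drift `g_N = β log N / N`. -/
theorem stmt_3 (β : ℝ) (hβ : 0 < β) (g r M : ℕ → ℝ)
    (hg : ∀ N : ℕ, g N = β * Real.log N / N)
    (hr : ∀ N : ℕ, r N = (1 + g N) / (1 - g N))
    (hM : ∀ N : ℕ, M N = (r N ^ (N - 1) - 1) / g N + r N ^ (N - 1)) :
    Tendsto (fun N : ℕ => M N * (β * Real.log N) / (N : ℝ) ^ (1 + 2 * β))
      atTop (nhds 1) := by
  have hg0 : Tendsto g atTop (𝓝 0) := by
    have := (tendsto_pow_log_div_natCast 1).const_mul β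
    rw [mul_zero] at this
    exact this.congr fun N => by rw [hg, pow_one, mul_div_assoc]
  have hg2 : Tendsto (fun N : ℕ => N * g N ^ 2) atTop (𝓝 0) := by
    have := (tendsto_pow_log_div_natCast 2).const_mul (β ^ 2)
    rw [mul_zero] at this
    refine this.congr' ?_
    filter_upwards [eventually_ge_atTop 1] with N hN
    have : (N : ℝ) ≠ 0 := by positivity
    rw [hg]; field_simp
  have hpow : Tendsto (fun N : ℕ => (N : ℝ) ^ (-(2 * β))) atTop (𝓝 0) :=
    (tendsto_rpow_neg_atTop (by positivity)).comp tendsto_natCast_atTop_atTop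
  have hlim := ((hg0.const_add 1).mul (tendsto_one_add_div_one_sub_pow_div_exp hg0 hg2)).sub hpow
  rw [add_zero, one_mul, sub_zero] at hlim
  refine hlim.congr' ?_
  filter_upwards [eventually_ge_atTop 2] with N hN
  have hN1 : (1 : ℝ) < N := by exact_mod_cast hN
  have hgN : g N ≠ 0 := by rw [hg]; have := log_pos hN1; positivity
  rw [hM, ← hr, mean_mul_log_div_rpow_eq (by linarith) (hg N) hgN, mul_div_assoc]
end

section
/- For every y > 0, lim_{ε→0+} F(⌊y/√(2ε)⌋, ε) / √(2ε) = tanh(y). -/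
open Filter Real

/-- `F N ε = 1 - E[e^{-ε τ^N}]`, where `τ^N` is the hitting time of `0` by a
simple symmetric random walk on `{0,…,N}` started at `1` and reflected at `N`;
here `s = e^{-ε}` and `χ = (1 + √(1-s²))/s`. -/
noncomputable def combF (N : ℕ) (ε : ℝ) : ℝ :=
  let s : ℝ := Real.exp (-ε)
  let χ : ℝ := (1 + Real.sqrt (1 - s ^ 2)) / s
  ((χ - 1) * χ ^ (2*N - 2) * (χ - s) + (1 - χ) * (s * χ - 1)) /
    (χ ^ (2*N - 1) * (χ - s) + (s * χ - 1))

/-! Write `s = e^{-ε}`, `δ = √(1 - s²)` and `χ = (1 + δ)/s = e^ε + √(e^{2ε} - 1)`. The identities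
`χ - s = δχ` and `sχ = 1 + δ` collapse `F(N, ε)` to `(χ - 1)(χ^{2N-1} - 1)/(χ^{2N} + 1)`.
As `ε → 0⁺`, `χ - 1 ∼ √(2ε)` while `N√(2ε) → y` for `N = ⌊y/√(2ε)⌋`, so
`χ^{2N} = exp (2N log χ) → e^{2y}` and `F/√(2ε) → (e^{2y} - 1)/(e^{2y} + 1) = tanh y`. -/

open Topology

theorem tendsto_pow_of_tendsto_natCast_mul_sub_one {α : Type*} {l : Filter α}
    {c : α → ℝ} {n : α → ℕ} {L : ℝ} (hc : Tendsto c l (𝓝 1))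
    (hn : Tendsto (fun x ↦ (n x : ℝ) * (c x - 1)) l (𝓝 L)) :
    Tendsto (fun x ↦ c x ^ n x) l (𝓝 (exp L)) := by
  have hlower : Tendsto (fun x ↦ (n x : ℝ) * (c x - 1) / c x) l (𝓝 L) := by
    have h := hn.div hc one_ne_zero
    rwa [div_one] at h
  have hlog : Tendsto (fun x ↦ (n x : ℝ) * log (c x)) l (𝓝 L) := by
    refine tendsto_of_tendsto_of_tendsto_of_le_of_le' hlower hn ?_ ?_ <;>
    filter_upwards [hc.eventually (lt_mem_nhds one_pos)] with x hx
    · calc (n x : ℝ) * (c x - 1) / c x = n x * (1 - (c x)⁻¹) := by field_simp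
        _ ≤ n x * log (c x) :=
          mul_le_mul_of_nonneg_left (one_sub_inv_le_log_of_pos hx) (Nat.cast_nonneg _)
    · exact mul_le_mul_of_nonneg_left (log_le_sub_one_of_pos hx) (Nat.cast_nonneg _)
  refine ((continuous_exp.tendsto L).comp hlog).congr' ?_
  filter_upwards [hc.eventually (lt_mem_nhds one_pos)] with x hx
  simp [exp_nat_mul, exp_log hx]

theorem tendsto_natFloor_div_mul_nhdsGT_zero {y : ℝ} (hy : 0 ≤ y) :
    Tendsto (fun t : ℝ ↦ (⌊y / t⌋₊ : ℝ) * t) (𝓝[>] 0) (𝓝 y) := by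
  refine ((tendsto_nat_floor_mul_div_atTop hy).comp tendsto_inv_nhdsGT_zero).congr fun t ↦ ?_
  simp [div_eq_mul_inv]

theorem tanh_eq_exp_two_mul (y : ℝ) : tanh y = (exp (2 * y) - 1) / (exp (2 * y) + 1) := by
  rw [tanh_eq, two_mul, exp_add, exp_neg]
  field_simp

noncomputable def chi (ε : ℝ) : ℝ := (1 + √(1 - exp (-ε) ^ 2)) / exp (-ε)

theorem chi_pos (ε : ℝ) : 0 < chi ε := by unfold chi; positivity

theorem chi_eq_exp_add_sqrt (ε : ℝ) : chi ε = exp ε + √(exp (2 * ε) - 1) := by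
  have hs : 0 < exp (-ε) := exp_pos _
  have hsq : exp (2 * ε) - 1 = (1 - exp (-ε) ^ 2) / exp (-ε) ^ 2 := by
    rw [exp_neg, show 2 * ε = ε + ε by ring, exp_add]
    field_simp
  rw [chi, hsq, sqrt_div' _ (sq_nonneg _), sqrt_sq hs.le, add_div, one_div, exp_neg, inv_inv]

theorem tendsto_chi_nhds_zero : Tendsto chi (𝓝 0) (𝓝 1) := by
  have : Continuous chi := by
    simp_rw [funext chi_eq_exp_add_sqrt]; fun_prop
  simpa [chi_eq_exp_add_sqrt] using this.tendsto 0

theorem tendsto_sqrt_two_mul_nhdsGT_zero :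
    Tendsto (fun ε : ℝ ↦ √(2 * ε)) (𝓝[>] 0) (𝓝[>] 0) := by
  refine tendsto_nhdsWithin_iff.2 ⟨?_, ?_⟩
  · have : Continuous fun ε : ℝ ↦ √(2 * ε) := by fun_prop
    simpa using (this.tendsto 0).mono_left nhdsWithin_le_nhds
  · filter_upwards [self_mem_nhdsWithin] with ε (hε : 0 < ε)
    exact sqrt_pos.2 (by positivity)

theorem tendsto_chi_sub_one_div_sqrt :
    Tendsto (fun ε ↦ (chi ε - 1) / √(2 * ε)) (𝓝[>] 0) (𝓝 1) := by
  have hexp : Tendsto (fun ε ↦ (exp ε - 1) / ε) (𝓝[>] 0) (𝓝 1) := by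
    simpa [div_eq_inv_mul] using (hasDerivAt_exp 0).tendsto_slope_zero_right
  have hexp2 : Tendsto (fun ε ↦ (exp (2 * ε) - 1) / ε) (𝓝[>] 0) (𝓝 2) := by
    simpa [div_eq_inv_mul] using
      (((hasDerivAt_id (0 : ℝ)).const_mul 2).exp).tendsto_slope_zero_right
  have hsqrt := tendsto_sqrt_two_mul_nhdsGT_zero.mono_right nhdsWithin_le_nhds
  have hlim := ((hsqrt.div_const 2).mul hexp).add ((hexp2.div_const 2).sqrt)
  rw [zero_div, zero_mul, zero_add, div_self two_ne_zero, sqrt_one] at hlim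
  refine hlim.congr' ?_
  filter_upwards [self_mem_nhdsWithin] with ε (hε : 0 < ε)
  have ht : 0 < √(2 * ε) := sqrt_pos.2 (by positivity)
  have htt : √(2 * ε) * √(2 * ε) = 2 * ε := mul_self_sqrt (by positivity)
  have hfirst : √(2 * ε) / 2 * ((exp ε - 1) / ε) = (exp ε - 1) / √(2 * ε) := by
    field_simp
    linear_combination (exp ε - 1) * htt
  have hsecond : √((exp (2 * ε) - 1) / ε / 2) = √(exp (2 * ε) - 1) / √(2 * ε) := by
    rw [div_div, mul_comm ε, sqrt_div' _ (by positivity)]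
  rw [hfirst, hsecond, chi_eq_exp_add_sqrt]
  ring

theorem combF_eq {N : ℕ} (hN : 1 ≤ N) {ε : ℝ} (hε : 0 < ε) :
    combF N ε = (chi ε - 1) * (chi ε ^ (2 * N - 1) - 1) / (chi ε ^ (2 * N) + 1) := by
  obtain ⟨M, rfl⟩ := Nat.exists_eq_add_of_le' hN
  set s := exp (-ε)
  set δ := √(1 - s ^ 2)
  have hs : 0 < s := exp_pos _
  have hs1 : s < 1 := exp_lt_one_iff.2 (neg_lt_zero.2 hε)
  have hδ : 0 < δ := sqrt_pos.2 (by nlinarith)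
  have hδsq : δ ^ 2 = 1 - s ^ 2 := sq_sqrt (by nlinarith)
  have hχ : chi ε = (1 + δ) / s := rfl
  have hχs : chi ε - s = δ * chi ε := by
    rw [hχ]; field_simp; linear_combination -hδsq
  have hsχ : s * chi ε = 1 + δ := by rw [hχ]; field_simp
  have hpos := chi_pos ε
  change ((chi ε - 1) * chi ε ^ (2 * (M + 1) - 2) * (chi ε - s) + (1 - chi ε) * (s * chi ε - 1)) /
    (chi ε ^ (2 * (M + 1) - 1) * (chi ε - s) + (s * chi ε - 1)) = _
  rw [hχs, hsχ, add_sub_cancel_left, show 2 * (M + 1) - 2 = 2 * M by omega,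
    show 2 * (M + 1) - 1 = 2 * M + 1 by omega, div_eq_div_iff (by positivity) (by positivity)]
  ring

theorem tendsto_chi_pow_two_mul_natFloor {y : ℝ} (hy : 0 ≤ y) :
    Tendsto (fun ε ↦ chi ε ^ (2 * ⌊y / √(2 * ε)⌋₊)) (𝓝[>] 0) (𝓝 (exp (2 * y))) := by
  have hNt := (tendsto_natFloor_div_mul_nhdsGT_zero hy).comp tendsto_sqrt_two_mul_nhdsGT_zero
  have hlim := (hNt.mul tendsto_chi_sub_one_div_sqrt).const_mul 2
  rw [mul_one] at hlim
  refine tendsto_pow_of_tendsto_natCast_mul_sub_one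
    (tendsto_chi_nhds_zero.mono_left nhdsWithin_le_nhds) (hlim.congr' ?_)
  filter_upwards [tendsto_sqrt_two_mul_nhdsGT_zero self_mem_nhdsWithin] with ε (ht : 0 < √(2 * ε))
  simp only [Function.comp_apply]
  push_cast
  field_simp

/-- For every `y > 0`, `F(⌊y/√(2ε)⌋, ε)/√(2ε) → tanh y` as `ε → 0⁺`. -/
theorem stmt_4 (y : ℝ) (hy : 0 < y) :
    Tendsto (fun ε : ℝ => combF ⌊y / Real.sqrt (2 * ε)⌋₊ ε / Real.sqrt (2 * ε))
      (nhdsWithin 0 (Set.Ioi 0)) (nhds (Real.tanh y)) := by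
  have hpow := tendsto_chi_pow_two_mul_natFloor hy.le
  have hchi : Tendsto chi (𝓝[>] 0) (𝓝 1) := tendsto_chi_nhds_zero.mono_left nhdsWithin_le_nhds
  have hlim := tendsto_chi_sub_one_div_sqrt.mul
    (((hpow.div hchi one_ne_zero).sub_const 1).div (hpow.add_const 1) (by positivity))
  rw [one_mul, div_one, ← tanh_eq_exp_two_mul] at hlim
  refine hlim.congr' ?_
  filter_upwards [self_mem_nhdsWithin,
    tendsto_sqrt_two_mul_nhdsGT_zero (Ioo_mem_nhdsGT hy)] with ε (hε : 0 < ε) ⟨ht, hty⟩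
  have hN : 1 ≤ ⌊y / √(2 * ε)⌋₊ := (Nat.one_le_floor_iff _).2 ((one_le_div ht).2 hty.le)
  rw [combF_eq hN hε, pow_sub₀ _ (chi_pos ε).ne' (by omega), pow_one]
  simp only [Pi.div_apply]
  ring
end

section
/- For every integer N ≥ 1, the quantity D := χ^{2N-1}(χ - s) + ξ^{N-1}(sχ - ξ) is strictly positive, and the ratio G := (ξ·χ^{2N-2}(χ - s) + ξ^{N-1}·χ·(sχ - ξ)) / D satisfies ξ/χ ≤ G ≤ 1; consequently 1 - G ≤ χ - ξ. -/
/-!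
Everything reduces to four facts about `ξ` and `χ`: `0 < ξ ≤ 1 ≤ χ` and `ξ < s χ`.
Writing `N = M + 1`, the numerator `A` and denominator `D` satisfy
`A χ - ξ D = ξ^M (sχ - ξ)(χ² - ξ)` and
`D - A = χ^{2M} (χ - s)(χ - ξ) - ξ^M (sχ - ξ)(χ - 1)`,
and the latter is nonnegative because `ξ^M ≤ χ^{2M}` and
`(χ - s)(χ - ξ) - (sχ - ξ)(χ - 1) = (1 - s)(χ² - ξ)`.
-/

open Real

noncomputable def largerRoot (s p : ℝ) : ℝ :=
  (1 + √(1 - 4 * s ^ 2 * p * (1 - p))) / (2 * s * p)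

section largerRoot

variable {s p : ℝ}

theorem one_le_largerRoot (hs : 0 < s) (hs1 : s ≤ 1) (hp : 0 < p)
    (hdisc : 4 * s ^ 2 * p * (1 - p) ≤ 1) : 1 ≤ largerRoot s p := by
  set r := √(1 - 4 * s ^ 2 * p * (1 - p))
  have hr : 0 ≤ r := sqrt_nonneg _
  have hr2 : r ^ 2 = 1 - 4 * s ^ 2 * p * (1 - p) := sq_sqrt (by linarith)
  -- `(2sp - 1)² ≤ r²` is equivalent to `s ≤ 1`
  have h : 2 * s * p ≤ 1 + r := by
    nlinarith [sq_nonneg (r + 2 * s * p - 1),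
      mul_nonneg (mul_nonneg hs.le hp.le) (sub_nonneg.mpr hs1)]
  rw [largerRoot, le_div_iff₀ (by positivity)]
  linarith

theorem div_lt_mul_largerRoot (hs : 0 < s) (hp : 1 / 2 ≤ p)
    (hdisc : 4 * s ^ 2 * p * (1 - p) < 1) : (1 - p) / p < s * largerRoot s p := by
  have hp0 : 0 < p := by linarith
  have hr : 0 < √(1 - 4 * s ^ 2 * p * (1 - p)) := sqrt_pos.mpr (by linarith)
  have h : s * largerRoot s p - (1 - p) / p
      = (2 * p - 1 + √(1 - 4 * s ^ 2 * p * (1 - p))) / (2 * p) := by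
    rw [largerRoot]; field_simp; ring
  have : 0 < s * largerRoot s p - (1 - p) / p := by
    rw [h]; exact div_pos (by linarith) (by linarith)
  linarith

end largerRoot

section Bounds

variable {s ξ χ : ℝ} (M : ℕ)

theorem denom_pos (hξ : 0 < ξ) (hsχ : ξ < s * χ) (hχs : s ≤ χ) (hχ : 0 ≤ χ) :
    0 < χ ^ (2 * M + 1) * (χ - s) + ξ ^ M * (s * χ - ξ) := by
  have h1 : 0 ≤ χ ^ (2 * M + 1) * (χ - s) := mul_nonneg (pow_nonneg hχ _) (by linarith)
  have h2 : 0 < ξ ^ M * (s * χ - ξ) := mul_pos (pow_pos hξ M) (by linarith)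
  linarith

theorem div_le_ratio (hξ : 0 ≤ ξ) (hsχ : ξ ≤ s * χ) (hξχ : ξ ≤ χ ^ 2) (hχ : 0 < χ)
    (hD : 0 < χ ^ (2 * M + 1) * (χ - s) + ξ ^ M * (s * χ - ξ)) :
    ξ / χ ≤ (ξ * χ ^ (2 * M) * (χ - s) + ξ ^ M * χ * (s * χ - ξ)) /
      (χ ^ (2 * M + 1) * (χ - s) + ξ ^ M * (s * χ - ξ)) := by
  rw [div_le_div_iff₀ hχ hD]
  have key : (ξ * χ ^ (2 * M) * (χ - s) + ξ ^ M * χ * (s * χ - ξ)) * χ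
      - ξ * (χ ^ (2 * M + 1) * (χ - s) + ξ ^ M * (s * χ - ξ))
      = ξ ^ M * (s * χ - ξ) * (χ ^ 2 - ξ) := by ring
  have : 0 ≤ ξ ^ M * (s * χ - ξ) * (χ ^ 2 - ξ) :=
    mul_nonneg (mul_nonneg (pow_nonneg hξ M) (by linarith)) (by linarith)
  linarith

theorem ratio_le_one (hξ : 0 ≤ ξ) (hξ1 : ξ ≤ 1) (hχ : 1 ≤ χ) (hs1 : s ≤ 1)
    (hsχ : ξ ≤ s * χ)
    (hD : 0 < χ ^ (2 * M + 1) * (χ - s) + ξ ^ M * (s * χ - ξ)) :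
    (ξ * χ ^ (2 * M) * (χ - s) + ξ ^ M * χ * (s * χ - ξ)) /
      (χ ^ (2 * M + 1) * (χ - s) + ξ ^ M * (s * χ - ξ)) ≤ 1 := by
  rw [div_le_one hD]
  have hξχ : ξ ≤ χ ^ 2 := by nlinarith
  have hpow : ξ ^ M ≤ χ ^ (2 * M) := by
    rw [pow_mul]; exact pow_le_pow_left₀ hξ hξχ M
  have hB : 0 ≤ (s * χ - ξ) * (χ - 1) := mul_nonneg (by linarith) (by linarith)
  have hBA : (s * χ - ξ) * (χ - 1) ≤ (χ - s) * (χ - ξ) := by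
    have : (χ - s) * (χ - ξ) - (s * χ - ξ) * (χ - 1) = (1 - s) * (χ ^ 2 - ξ) := by ring
    nlinarith
  have key : χ ^ (2 * M + 1) * (χ - s) + ξ ^ M * (s * χ - ξ)
      - (ξ * χ ^ (2 * M) * (χ - s) + ξ ^ M * χ * (s * χ - ξ))
      = χ ^ (2 * M) * ((χ - s) * (χ - ξ)) - ξ ^ M * ((s * χ - ξ) * (χ - 1)) := by ring
  have h1 := mul_le_mul_of_nonneg_right hpow hB
  have h2 := mul_le_mul_of_nonneg_left hBA (pow_nonneg (zero_le_one.trans hχ) (2 * M))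
  linarith

end Bounds

theorem one_sub_le_sub_of_div_le {ξ χ G : ℝ} (hχ : 1 ≤ χ) (hξχ : ξ ≤ χ) (hG : ξ / χ ≤ G) :
    1 - G ≤ χ - ξ := by
  have h : 1 - ξ / χ = (χ - ξ) / χ := by field_simp
  have : (χ - ξ) / χ ≤ χ - ξ := div_le_self (by linarith) hχ
  linarith

/-- The denominator `D` of the hitting-time generating function is positive,
the generating function `G = E[s^{τ^N}]` satisfies `ξ/χ ≤ G ≤ 1`, and
consequently `1 - G ≤ χ - ξ`. -/
theorem stmt_6 (s p : ℝ) (hs : 0 < s) (hs1 : s ≤ 1) (hp : 1/2 ≤ p) (hp1 : p < 1)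
    (hdisc : 4 * s^2 * p * (1 - p) < 1)
    (ξ χ : ℝ) (hξ : ξ = (1 - p) / p)
    (hχ : χ = (1 + Real.sqrt (1 - 4 * s^2 * p * (1 - p))) / (2 * s * p))
    (N : ℕ) (hN : 1 ≤ N)
    (D G : ℝ)
    (hD : D = χ ^ (2*N - 1) * (χ - s) + ξ ^ (N - 1) * (s * χ - ξ))
    (hG : G = (ξ * χ ^ (2*N - 2) * (χ - s) + ξ ^ (N - 1) * χ * (s * χ - ξ)) / D) :
    0 < D ∧ ξ / χ ≤ G ∧ G ≤ 1 ∧ 1 - G ≤ χ - ξ := by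
  have hp0 : 0 < p := by linarith
  have hξ0 : 0 < ξ := by rw [hξ]; exact div_pos (by linarith) hp0
  have hξ1 : ξ ≤ 1 := by rw [hξ, div_le_one hp0]; linarith
  have hχ1 : 1 ≤ χ := hχ ▸ one_le_largerRoot hs hs1 hp0 hdisc.le
  have hsχ : ξ < s * χ := hξ ▸ hχ ▸ div_lt_mul_largerRoot hs hp hdisc
  obtain ⟨M, rfl⟩ : ∃ M, N = M + 1 := ⟨N - 1, by omega⟩
  rw [show 2 * (M + 1) - 1 = 2 * M + 1 by omega, Nat.add_sub_cancel] at hD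
  rw [show 2 * (M + 1) - 2 = 2 * M by omega, Nat.add_sub_cancel] at hG
  subst hD hG
  have hD0 := denom_pos M hξ0 hsχ (by linarith) (by linarith)
  have hlow := div_le_ratio M hξ0.le hsχ.le (by nlinarith) (by linarith) hD0
  exact ⟨hD0, hlow, ratio_le_one M hξ0.le hξ1 hχ1 hs1 hsχ.le hD0,
    one_sub_le_sub_of_div_le hχ1 (by linarith) hlow⟩
end

section
/- Let α > 0, β > 0 with α + β < 1, let c > 0, and let ν be a probability measure on ℝ supported in [1,∞) such that lim_{u→∞} u^α · ν({t : t > u}) = c. Then lim_{ε→0+} ε^{-(α+β)} ∫ t^{-β}(1 - e^{-ε t}) dν(t) = c·α·∫₀^∞ t^{-1-α-β}(1 - e^{-t}) dt, where the right-hand integral is finite. -/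
/-!
With `K(s) = s^{-β}(1 - e^{-s})` one has `t^{-β}(1 - e^{-εt}) = ε^β K(εt) = ε^β ∫₀^{εt} K'`,
so by Fubini `∫ t^{-β}(1 - e^{-εt}) dν = ε^β ∫₀^∞ ν(t > s/ε) K'(s) ds`. Writing
`ε^{-α} ν(t > s/ε) = s^{-α} · (s/ε)^α ν(t > s/ε)`, the tail hypothesis gives both the
pointwise limit `c s^{-α}` and a bound `C s^{-α}`, so dominated convergence yields
`c ∫₀^∞ s^{-α} K'(s) ds`. Since `s^{-α} K(s) = s^{-α-β}(1 - e^{-s})`, an integration by parts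
turns this into `c α ∫₀^∞ s^{-1-α-β}(1 - e^{-s}) ds`.
-/

open Filter Real MeasureTheory Set Topology

namespace TrapModel

noncomputable def kernel (γ s : ℝ) : ℝ := s ^ (-γ) * (1 - exp (-s))

noncomputable def kernelDeriv (γ s : ℝ) : ℝ :=
  s ^ (-γ) * exp (-s) - γ * (s ^ (-1 - γ) * (1 - exp (-s)))

lemma one_sub_exp_neg_nonneg {s : ℝ} (hs : 0 ≤ s) : 0 ≤ 1 - exp (-s) := by
  linarith [exp_le_one_iff.2 (neg_nonpos.2 hs)]

lemma one_sub_exp_neg_le_min (s : ℝ) : 1 - exp (-s) ≤ min s 1 :=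
  le_min (by linarith [one_sub_le_exp_neg s]) (by linarith [exp_pos (-s)])

lemma integrableOn_rpow_neg_mul_exp_neg {γ : ℝ} (hγ : γ < 1) :
    IntegrableOn (fun s : ℝ => s ^ (-γ) * exp (-s)) (Ioi 0) :=
  (GammaIntegral_convergent (s := 1 - γ) (by linarith)).congr_fun
    (fun s _ => by rw [mul_comm, sub_sub_cancel_left]) measurableSet_Ioi

lemma integrableOn_rpow_mul_min_one {γ : ℝ} (h0 : 0 < γ) (h1 : γ < 1) :
    IntegrableOn (fun s : ℝ => s ^ (-1 - γ) * min s 1) (Ioi 0) := by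
  rw [← Ioc_union_Ioi_eq_Ioi zero_le_one]
  refine IntegrableOn.union ?_ ?_
  · have hsmall : IntegrableOn (fun s : ℝ => s ^ (-γ)) (Ioc 0 1) :=
      (intervalIntegrable_iff_integrableOn_Ioc_of_le zero_le_one).1
        (intervalIntegral.intervalIntegrable_rpow' (r := -γ) (by linarith))
    refine hsmall.congr_fun (fun s hs => ?_) measurableSet_Ioc
    rw [min_eq_left hs.2, ← rpow_add_one hs.1.ne']
    ring_nf
  · refine (integrableOn_Ioi_rpow_of_lt (a := -1 - γ) (by linarith) one_pos).congr_fun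
      (fun s hs => ?_) measurableSet_Ioi
    rw [min_eq_right (le_of_lt hs), mul_one]

lemma integrableOn_rpow_mul_one_sub_exp_neg {γ : ℝ} (h0 : 0 < γ) (h1 : γ < 1) :
    IntegrableOn (fun s : ℝ => s ^ (-1 - γ) * (1 - exp (-s))) (Ioi 0) := by
  refine (integrableOn_rpow_mul_min_one h0 h1).mono'
    (by fun_prop : Measurable fun s : ℝ => s ^ (-1 - γ) * (1 - exp (-s))).aestronglyMeasurable
    ((ae_restrict_iff' measurableSet_Ioi).2 (.of_forall fun s (hs : 0 < s) => ?_))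
  rw [norm_of_nonneg (mul_nonneg (rpow_nonneg hs.le _) (one_sub_exp_neg_nonneg hs.le))]
  exact mul_le_mul_of_nonneg_left (one_sub_exp_neg_le_min s) (rpow_nonneg hs.le _)

lemma measurable_kernelDeriv (γ : ℝ) : Measurable (kernelDeriv γ) := by
  unfold kernelDeriv; fun_prop

lemma integrableOn_kernelDeriv {γ : ℝ} (h0 : 0 < γ) (h1 : γ < 1) :
    IntegrableOn (kernelDeriv γ) (Ioi 0) :=
  (integrableOn_rpow_neg_mul_exp_neg h1).sub
    ((integrableOn_rpow_mul_one_sub_exp_neg h0 h1).const_mul γ)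

lemma hasDerivAt_kernel (γ : ℝ) {s : ℝ} (hs : 0 < s) :
    HasDerivAt (kernel γ) (kernelDeriv γ s) s := by
  have hpow : HasDerivAt (fun s : ℝ => s ^ (-γ)) (-γ * s ^ (-γ - 1)) s :=
    hasDerivAt_rpow_const (Or.inl hs.ne')
  have hexp : HasDerivAt (fun s : ℝ => 1 - exp (-s)) (exp (-s)) s := by
    simpa using ((hasDerivAt_exp (-s)).comp s (hasDerivAt_neg s)).const_sub 1
  refine (hpow.mul hexp).congr_deriv ?_
  rw [kernelDeriv, show -1 - γ = -γ - 1 by ring]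
  ring

lemma tendsto_kernel_nhdsGT_zero {γ : ℝ} (hγ : γ < 1) :
    Tendsto (kernel γ) (𝓝[>] 0) (𝓝 0) := by
  have hpow : Tendsto (fun s : ℝ => s ^ (1 - γ)) (𝓝[>] 0) (𝓝 0) := by
    have := (continuousAt_rpow_const 0 (1 - γ) (Or.inr (by linarith))).tendsto
    rw [zero_rpow (by linarith)] at this
    exact this.mono_left nhdsWithin_le_nhds
  refine tendsto_of_tendsto_of_tendsto_of_le_of_le' tendsto_const_nhds hpow ?_ ?_ <;>
    filter_upwards [self_mem_nhdsWithin] with s (hs : 0 < s)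
  · exact mul_nonneg (rpow_nonneg hs.le _) (one_sub_exp_neg_nonneg hs.le)
  · calc kernel γ s ≤ s ^ (-γ) * s :=
          mul_le_mul_of_nonneg_left (one_sub_exp_neg_le_min s |>.trans (min_le_left _ _))
            (rpow_nonneg hs.le _)
      _ = s ^ (1 - γ) := by rw [← rpow_add_one hs.ne']; ring_nf

lemma tendsto_kernel_atTop {γ : ℝ} (hγ : 0 < γ) : Tendsto (kernel γ) atTop (𝓝 0) := by
  have h1 : Tendsto (fun s : ℝ => 1 - exp (-s)) atTop (𝓝 1) := by
    simpa using tendsto_const_nhds.sub tendsto_exp_neg_atTop_nhds_zero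
  have h := (tendsto_rpow_neg_atTop hγ).mul h1
  rwa [zero_mul] at h

lemma integral_Ioo_kernelDeriv {γ : ℝ} (h0 : 0 < γ) (h1 : γ < 1) {x : ℝ} (hx : 0 < x) :
    ∫ s in Ioo 0 x, kernelDeriv γ s = kernel γ x := by
  have hint : IntervalIntegrable (kernelDeriv γ) volume 0 x :=
    (intervalIntegrable_iff_integrableOn_Ioc_of_le hx.le).2
      ((integrableOn_kernelDeriv h0 h1).mono_set Ioc_subset_Ioi_self)
  have := intervalIntegral.integral_eq_sub_of_hasDerivAt_of_tendsto hx
    (fun s hs => hasDerivAt_kernel γ hs.1) hint (tendsto_kernel_nhdsGT_zero h1)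
    ((hasDerivAt_kernel γ hx).continuousAt.tendsto.mono_left nhdsWithin_le_nhds)
  rwa [intervalIntegral.integral_of_le hx.le, integral_Ioc_eq_integral_Ioo, sub_zero] at this

lemma integral_Ioi_kernelDeriv {γ : ℝ} (h0 : 0 < γ) (h1 : γ < 1) :
    ∫ s in Ioi 0, kernelDeriv γ s = 0 := by
  have hcont : ContinuousWithinAt (kernel γ) (Ici 0) 0 := by
    rw [← continuousWithinAt_Ioi_iff_Ici, ContinuousWithinAt]
    simpa [kernel] using tendsto_kernel_nhdsGT_zero h1
  simpa [kernel] using integral_Ioi_of_hasDerivAt_of_tendsto hcont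
    (fun s hs => hasDerivAt_kernel γ hs) (integrableOn_kernelDeriv h0 h1)
    (tendsto_kernel_atTop h0)

lemma rpow_neg_mul_kernelDeriv (α β : ℝ) {s : ℝ} (hs : 0 < s) :
    s ^ (-α) * kernelDeriv β s
      = kernelDeriv (α + β) s + α * (s ^ (-1 - (α + β)) * (1 - exp (-s))) := by
  have h1 : s ^ (-α) * s ^ (-β) = s ^ (-(α + β)) := by rw [← rpow_add hs]; ring_nf
  have h2 : s ^ (-α) * s ^ (-1 - β) = s ^ (-1 - (α + β)) := by rw [← rpow_add hs]; ring_nf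
  simp only [kernelDeriv]
  linear_combination exp (-s) * h1 - β * (1 - exp (-s)) * h2

lemma integrableOn_rpow_neg_mul_kernelDeriv {α β : ℝ} (h0 : 0 < α + β) (h1 : α + β < 1) :
    IntegrableOn (fun s : ℝ => s ^ (-α) * kernelDeriv β s) (Ioi 0) :=
  ((integrableOn_kernelDeriv h0 h1).add
    ((integrableOn_rpow_mul_one_sub_exp_neg h0 h1).const_mul α)).congr_fun
    (fun _ hs => (rpow_neg_mul_kernelDeriv α β hs).symm) measurableSet_Ioi

lemma integral_rpow_neg_mul_kernelDeriv {α β : ℝ} (h0 : 0 < α + β) (h1 : α + β < 1) :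
    ∫ s in Ioi 0, s ^ (-α) * kernelDeriv β s
      = α * ∫ s in Ioi 0, s ^ (-1 - (α + β)) * (1 - exp (-s)) := by
  rw [setIntegral_congr_fun measurableSet_Ioi (fun _ hs => rpow_neg_mul_kernelDeriv α β hs),
    integral_add (integrableOn_kernelDeriv h0 h1)
      ((integrableOn_rpow_mul_one_sub_exp_neg h0 h1).const_mul α),
    integral_Ioi_kernelDeriv h0 h1, integral_const_mul, zero_add]

lemma rpow_neg_mul_one_sub_exp_eq (β : ℝ) {ε t : ℝ} (hε : 0 < ε) (ht : 0 < t) :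
    t ^ (-β) * (1 - exp (-(ε * t))) = ε ^ β * kernel β (ε * t) := by
  rw [kernel, mul_rpow hε.le ht.le, ← mul_assoc, ← mul_assoc, ← rpow_add hε, add_neg_cancel,
    rpow_zero, one_mul]

lemma integral_integral_Ioo_eq_integral_measureReal_mul {ν : Measure ℝ} [IsFiniteMeasure ν]
    {f : ℝ → ℝ} (hf : IntegrableOn f (Ioi 0)) {ε : ℝ} (hε : 0 < ε) :
    ∫ t, (∫ s in Ioo 0 (ε * t), f s) ∂ν = ∫ s in Ioi 0, ν.real {t | s / ε < t} * f s := by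
  set S : Set (ℝ × ℝ) := {p | 0 < p.2 ∧ p.2 < ε * p.1}
  have hS : MeasurableSet S :=
    (measurableSet_lt measurable_const measurable_snd).inter
      (measurableSet_lt measurable_snd (measurable_fst.const_mul ε))
  have hS_eq : ∀ t s, (Ioo 0 (ε * t)).indicator f s
      = S.indicator (fun p => (Ioi 0).indicator f p.2) (t, s) := fun t s => by
    by_cases h : s ∈ Ioo 0 (ε * t) <;> simp_all [S, indicator_apply]
  have hswap_eq : ∀ t s, (Ioo 0 (ε * t)).indicator f s
      = (Ioi 0).indicator (fun s => {t | s / ε < t}.indicator (fun _ => f s) t) s := fun t s => by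
    by_cases h : s ∈ Ioo 0 (ε * t) <;> simp_all [indicator_apply, div_lt_iff₀' hε]
  have hint : Integrable (Function.uncurry fun t s => (Ioo 0 (ε * t)).indicator f s)
      (ν.prod volume) := by
    simp only [hS_eq]
    exact (((integrable_indicator_iff measurableSet_Ioi).2 hf).comp_snd ν).indicator hS
  calc ∫ t, (∫ s in Ioo 0 (ε * t), f s) ∂ν
      = ∫ t, (∫ s, (Ioo 0 (ε * t)).indicator f s) ∂ν := by
        simp_rw [integral_indicator measurableSet_Ioo]
    _ = ∫ s, (∫ t, (Ioo 0 (ε * t)).indicator f s ∂ν) := integral_integral_swap hint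
    _ = ∫ s, (Ioi 0).indicator (fun s => ν.real {t | s / ε < t} * f s) s := by
        congr with s
        simp_rw [hswap_eq]
        by_cases hs : s ∈ Ioi 0
        · simp only [indicator_of_mem hs]
          exact integral_indicator_const (f s) measurableSet_Ioi
        · simp [hs]
    _ = ∫ s in Ioi 0, ν.real {t | s / ε < t} * f s := integral_indicator measurableSet_Ioi

lemma integral_rpow_neg_mul_one_sub_exp_eq {ν : Measure ℝ} [IsFiniteMeasure ν]
    (hν : ∀ᵐ t ∂ν, 0 < t) {β : ℝ} (h0 : 0 < β) (h1 : β < 1) {ε : ℝ} (hε : 0 < ε) :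
    ∫ t, t ^ (-β) * (1 - exp (-(ε * t))) ∂ν
      = ε ^ β * ∫ s in Ioi 0, ν.real {t | s / ε < t} * kernelDeriv β s := by
  rw [← integral_integral_Ioo_eq_integral_measureReal_mul (integrableOn_kernelDeriv h0 h1) hε,
    ← integral_const_mul]
  refine integral_congr_ae (hν.mono fun t ht => ?_)
  dsimp only
  rw [rpow_neg_mul_one_sub_exp_eq β hε ht, integral_Ioo_kernelDeriv h0 h1 (mul_pos hε ht)]

lemma exists_forall_pos_rpow_mul_le {G : ℝ → ℝ} {α c : ℝ} (hα : 0 ≤ α)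
    (hG : ∀ u, G u ≤ 1) (htail : Tendsto (fun u => u ^ α * G u) atTop (𝓝 c)) :
    ∃ C, ∀ u > 0, u ^ α * G u ≤ C := by
  obtain ⟨u₀, hu₀⟩ := eventually_atTop.1 (htail.eventually_le_const (lt_add_one c))
  refine ⟨max (c + 1) (u₀ ^ α), fun u hu => ?_⟩
  rcases le_or_gt u₀ u with h | h
  · exact (hu₀ u h).trans (le_max_left _ _)
  · calc u ^ α * G u ≤ u ^ α := mul_le_of_le_one_right (rpow_nonneg hu.le _) (hG u)
      _ ≤ u₀ ^ α := rpow_le_rpow hu.le h.le hα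
      _ ≤ _ := le_max_right _ _

lemma tendsto_rpow_neg_mul_integral_comp_div_mul {G f : ℝ → ℝ} {α c : ℝ} (hα : 0 ≤ α)
    (hGm : Measurable G) (hG0 : ∀ u, 0 ≤ G u) (hG1 : ∀ u, G u ≤ 1)
    (htail : Tendsto (fun u => u ^ α * G u) atTop (𝓝 c))
    (hfm : AEStronglyMeasurable f (volume.restrict (Ioi 0)))
    (hf : IntegrableOn (fun s => s ^ (-α) * f s) (Ioi 0)) :
    Tendsto (fun ε => ε ^ (-α) * ∫ s in Ioi 0, G (s / ε) * f s) (𝓝[>] 0)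
      (𝓝 (c * ∫ s in Ioi 0, s ^ (-α) * f s)) := by
  obtain ⟨C, hC⟩ := exists_forall_pos_rpow_mul_le hα hG1 htail
  have hrw : ∀ ε > 0, ∀ s > 0,
      ε ^ (-α) * (G (s / ε) * f s) = (s / ε) ^ α * G (s / ε) * (s ^ (-α) * f s) := by
    intro ε hε s hs
    rw [div_rpow hs.le hε.le, rpow_neg hs.le, rpow_neg hε.le]
    field_simp [(rpow_pos_of_pos hs α).ne']
  simp_rw [← integral_const_mul]
  refine tendsto_integral_filter_of_dominated_convergence (fun s => C * ‖s ^ (-α) * f s‖)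
    (.of_forall fun ε => ((hGm.comp (measurable_id.div_const ε)).aestronglyMeasurable.mul
      hfm).const_mul _) ?_ (hf.norm.const_mul C) ?_
  · filter_upwards [self_mem_nhdsWithin] with ε (hε : 0 < ε)
    refine (ae_restrict_iff' measurableSet_Ioi).2 (.of_forall fun s (hs : 0 < s) => ?_)
    have hu : 0 < s / ε := div_pos hs hε
    rw [hrw ε hε s hs, norm_mul,
      norm_of_nonneg (mul_nonneg (rpow_nonneg hu.le _) (hG0 _))]
    exact mul_le_mul_of_nonneg_right (hC _ hu) (norm_nonneg _)
  · refine (ae_restrict_iff' measurableSet_Ioi).2 (.of_forall fun s (hs : 0 < s) => ?_)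
    have hdiv : Tendsto (fun ε => s / ε) (𝓝[>] 0) atTop := by
      simpa [div_eq_mul_inv] using tendsto_inv_nhdsGT_zero.const_mul_atTop hs
    refine ((htail.comp hdiv).mul_const _).congr' ?_
    filter_upwards [self_mem_nhdsWithin] with ε (hε : 0 < ε)
    exact (hrw ε hε s hs).symm

end TrapModel

open TrapModel in
theorem stmt_7_general (α β c : ℝ) (hα : 0 < α) (hβ : 0 < β) (hαβ : α + β < 1)
    (ν : Measure ℝ) [IsProbabilityMeasure ν]
    (hsupp : ν (Set.Iio 1) = 0)
    (htail : Tendsto (fun u : ℝ => u ^ α * (ν {t : ℝ | u < t}).toReal)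
      atTop (nhds c)) :
    IntegrableOn (fun t : ℝ => t ^ (-1 - α - β) * (1 - Real.exp (-t)))
        (Set.Ioi 0) volume ∧
      Tendsto (fun ε : ℝ =>
          ε ^ (-(α + β)) * ∫ t, t ^ (-β) * (1 - Real.exp (-(ε * t))) ∂ν)
        (nhdsWithin 0 (Set.Ioi 0))
        (nhds (c * α * ∫ t in Set.Ioi (0:ℝ),
          t ^ (-1 - α - β) * (1 - Real.exp (-t)))) := by
  have hαβ0 : 0 < α + β := by linarith
  have hpos : ∀ᵐ t ∂ν, 0 < t :=
    measure_mono_null (fun t (ht : ¬ 0 < t) => (not_lt.1 ht).trans_lt one_pos) hsupp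
  have hanti : Antitone fun u => ν.real {t | u < t} :=
    fun u v huv => measureReal_mono fun t ht => huv.trans_lt ht
  simp only [sub_sub]
  refine ⟨integrableOn_rpow_mul_one_sub_exp_neg hαβ0 hαβ, ?_⟩
  rw [mul_assoc, ← integral_rpow_neg_mul_kernelDeriv hαβ0 hαβ]
  refine (tendsto_rpow_neg_mul_integral_comp_div_mul hα.le hanti.measurable
    (fun _ => measureReal_nonneg) (fun _ => measureReal_le_one) htail
    (measurable_kernelDeriv β).aestronglyMeasurable
    (integrableOn_rpow_neg_mul_kernelDeriv hαβ0 hαβ)).congr' ?_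
  filter_upwards [self_mem_nhdsWithin] with ε (hε : 0 < ε)
  rw [integral_rpow_neg_mul_one_sub_exp_eq hpos hβ (by linarith) hε, ← mul_assoc,
    ← rpow_add hε, neg_add, neg_add_cancel_right]

/-- Abelian-type asymptotics for `Γ(ε) = ∫ t^{-β}(1 - e^{-εt}) dν(t)` when the
law `ν` of the trap depth has a regularly varying tail of index `α`:
`ε^{-(α+β)} Γ(ε) → cα ∫₀^∞ t^{-1-α-β}(1-e^{-t}) dt`, the latter integral
being finite. -/
theorem stmt_7 (α β c : ℝ) (hα : 0 < α) (hβ : 0 < β) (hαβ : α + β < 1) (hc : 0 < c)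
    (ν : Measure ℝ) [IsProbabilityMeasure ν]
    (hsupp : ν (Set.Iio 1) = 0)
    (htail : Tendsto (fun u : ℝ => u ^ α * (ν {t : ℝ | u < t}).toReal)
      atTop (nhds c)) :
    IntegrableOn (fun t : ℝ => t ^ (-1 - α - β) * (1 - Real.exp (-t)))
        (Set.Ioi 0) volume ∧
      Tendsto (fun ε : ℝ =>
          ε ^ (-(α + β)) * ∫ t, t ^ (-β) * (1 - Real.exp (-(ε * t))) ∂ν)
        (nhdsWithin 0 (Set.Ioi 0))
        (nhds (c * α * ∫ t in Set.Ioi (0:ℝ),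
          t ^ (-1 - α - β) * (1 - Real.exp (-t)))) :=
  stmt_7_general α β c hα hβ hαβ ν hsupp htail
end

section
/- Let α > 0, β > 0 with α + 2β < 2, let c > 0, and let ν be a probability measure on ℝ supported in [1,∞) such that lim_{u→∞} u^α · ν({t : t > u}) = c. Then lim_{ε→0+} ε^{-(α+2β)} ∫ t^{-2β}(1 - e^{-ε t})² dν(t) = c·α·∫₀^∞ t^{-1-α-2β}(1 - e^{-t})² dt, where the right-hand integral is finite. -/
/-!
With `h(u) = u^{-2β} (1 - e^{-u})²` the integrand is `ε^{2β} h(εt)`. Writing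
`h(εt) = -∫_{εt}^∞ h'` and exchanging the integrals gives
`∫ h(εt) dν = ∫₀^∞ h'(s) ν(t > s/ε) ds`. After multiplication by `ε^{-α}` the integrand becomes
`s^{-α} h'(s) · ψ(s/ε)` with `ψ(u) = u^α ν(t > u)` bounded and tending to `c`, so dominated
convergence gives the limit `c ∫₀^∞ s^{-α} h'(s) ds`, which an integration by parts turns into
`cα ∫₀^∞ s^{-1-α} h(s) ds`.
-/

open Filter Real MeasureTheory Set Topology

lemma one_sub_exp_neg_nonneg {s : ℝ} (hs : 0 ≤ s) : 0 ≤ 1 - exp (-s) := by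
  simpa using exp_le_one_iff.mpr (neg_nonpos.mpr hs)

lemma one_sub_exp_neg_le_one (s : ℝ) : 1 - exp (-s) ≤ 1 := by
  linarith [exp_pos (-s)]

lemma one_sub_exp_neg_le_self (s : ℝ) : 1 - exp (-s) ≤ s := by
  linarith [one_sub_le_exp_neg s]

noncomputable def rpowOneSubExpSq (p s : ℝ) : ℝ := s ^ p * (1 - exp (-s)) ^ 2

noncomputable def rpowOneSubExpSqDeriv (p s : ℝ) : ℝ :=
  p * s ^ (p - 1) * (1 - exp (-s)) ^ 2 + 2 * s ^ p * ((1 - exp (-s)) * exp (-s))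

namespace rpowOneSubExpSq

lemma nonneg (p : ℝ) {s : ℝ} (hs : 0 ≤ s) : 0 ≤ rpowOneSubExpSq p s :=
  mul_nonneg (rpow_nonneg hs p) (sq_nonneg _)

lemma le_rpow (p : ℝ) {s : ℝ} (hs : 0 ≤ s) : rpowOneSubExpSq p s ≤ s ^ p :=
  mul_le_of_le_one_right (rpow_nonneg hs p)
    (pow_le_one₀ (one_sub_exp_neg_nonneg hs) (one_sub_exp_neg_le_one s))

lemma le_rpow_add_two (p : ℝ) {s : ℝ} (hs : 0 < s) : rpowOneSubExpSq p s ≤ s ^ (p + 2) := by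
  rw [rpow_add hs, rpow_two]
  exact mul_le_mul_of_nonneg_left
    (pow_le_pow_left₀ (one_sub_exp_neg_nonneg hs.le) (one_sub_exp_neg_le_self s) 2)
    (rpow_nonneg hs.le p)

lemma apply_const_mul (p : ℝ) {ε t : ℝ} (hε : 0 ≤ ε) (ht : 0 ≤ t) :
    rpowOneSubExpSq p (ε * t) = ε ^ p * (t ^ p * (1 - exp (-(ε * t))) ^ 2) := by
  rw [rpowOneSubExpSq, mul_rpow hε ht, mul_assoc]

@[simp] lemma apply_zero (p : ℝ) : rpowOneSubExpSq p 0 = 0 := by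
  simp [rpowOneSubExpSq]

lemma hasDerivAt (p : ℝ) {s : ℝ} (hs : 0 < s) :
    HasDerivAt (rpowOneSubExpSq p) (rpowOneSubExpSqDeriv p s) s := by
  have h : HasDerivAt (fun x : ℝ => x ^ p * (1 - exp (-x)) ^ 2) _ s :=
    (hasDerivAt_rpow_const (Or.inl hs.ne')).mul (((hasDerivAt_neg s).exp.const_sub 1).pow 2)
  refine h.congr_deriv ?_
  rw [rpowOneSubExpSqDeriv]
  push_cast
  ring

lemma continuousWithinAt_zero {p : ℝ} (hp : -2 < p) :
    ContinuousWithinAt (rpowOneSubExpSq p) (Ici 0) 0 := by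
  have hlim : Tendsto (fun s : ℝ => s ^ (p + 2)) (𝓝[Ici 0] 0) (𝓝 0) := by
    have h := (continuousAt_rpow_const 0 (p + 2) (Or.inr (by linarith))).continuousWithinAt
      (s := Ici (0:ℝ))
    rwa [ContinuousWithinAt, zero_rpow (by linarith)] at h
  rw [ContinuousWithinAt, apply_zero]
  refine squeeze_zero' ?_ ?_ hlim
  · filter_upwards [self_mem_nhdsWithin] with s hs using nonneg p hs
  · filter_upwards [self_mem_nhdsWithin] with s (hs : 0 ≤ s)
    rcases hs.eq_or_lt with rfl | hs
    · simp [zero_rpow (by linarith : p + 2 ≠ 0)]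
    · exact le_rpow_add_two p hs

lemma tendsto_atTop {p : ℝ} (hp : p < 0) :
    Tendsto (rpowOneSubExpSq p) atTop (𝓝 0) := by
  have hlim : Tendsto (fun s : ℝ => s ^ p) atTop (𝓝 0) := by
    simpa using tendsto_rpow_neg_atTop (neg_pos.mpr hp)
  refine squeeze_zero' ?_ ?_ hlim
  · filter_upwards [eventually_ge_atTop 0] with s hs using nonneg p hs
  · filter_upwards [eventually_ge_atTop 0] with s hs using le_rpow p hs

lemma measurable (p : ℝ) : Measurable (rpowOneSubExpSq p) := by
  unfold rpowOneSubExpSq; fun_prop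

lemma integrableOn_Ioi {p : ℝ} (hp₃ : -3 < p) (hp₁ : p < -1) :
    IntegrableOn (rpowOneSubExpSq p) (Ioi 0) := by
  rw [← Ioo_union_Ici_eq_Ioi zero_lt_one]
  refine IntegrableOn.union ?_ ?_
  · refine ((intervalIntegral.integrableOn_Ioo_rpow_iff zero_lt_one).mpr (by linarith :
      -1 < p + 2)).mono' (measurable p).aestronglyMeasurable ?_
    filter_upwards [ae_restrict_mem measurableSet_Ioo] with s hs
    rw [norm_of_nonneg (nonneg p hs.1.le)]
    exact le_rpow_add_two p hs.1
  · refine ((integrableOn_Ici_iff_integrableOn_Ioi (f := fun s : ℝ => s ^ p)).mpr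
      (integrableOn_Ioi_rpow_of_lt hp₁ zero_lt_one)).mono' (measurable p).aestronglyMeasurable ?_
    filter_upwards [ae_restrict_mem measurableSet_Ici] with s (hs : 1 ≤ s)
    rw [norm_of_nonneg (nonneg p (by linarith))]
    exact le_rpow p (by linarith)

end rpowOneSubExpSq

lemma integrableOn_rpow_mul_one_sub_exp_neg_mul_exp_neg {q : ℝ} (hq : -2 < q) :
    IntegrableOn (fun s : ℝ => s ^ q * ((1 - exp (-s)) * exp (-s))) (Ioi 0) := by
  refine (GammaIntegral_convergent (by linarith : 0 < q + 2)).mono'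
    (by fun_prop : Measurable _).aestronglyMeasurable ?_
  filter_upwards [ae_restrict_mem measurableSet_Ioi] with s (hs : 0 < s)
  rw [norm_of_nonneg (mul_nonneg (rpow_nonneg hs.le q)
    (mul_nonneg (one_sub_exp_neg_nonneg hs.le) (exp_pos _).le)),
    show q + 2 - 1 = q + 1 by ring, rpow_add_one hs.ne']
  calc s ^ q * ((1 - exp (-s)) * exp (-s)) ≤ s ^ q * (s * exp (-s)) := by
        gcongr
        exact one_sub_exp_neg_le_self s
    _ = exp (-s) * (s ^ q * s) := by ring

namespace rpowOneSubExpSqDeriv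

lemma integrableOn_Ioi {p : ℝ} (hp₂ : -2 < p) (hp₀ : p < 0) :
    IntegrableOn (rpowOneSubExpSqDeriv p) (Ioi 0) := by
  have h₁ := (rpowOneSubExpSq.integrableOn_Ioi (p := p - 1) (by linarith)
    (by linarith)).const_mul p
  have h₂ := (integrableOn_rpow_mul_one_sub_exp_neg_mul_exp_neg hp₂).const_mul 2
  refine IntegrableOn.congr_fun (h₁.add h₂) (fun s _ => ?_) measurableSet_Ioi
  simp only [Pi.add_apply, rpowOneSubExpSqDeriv, rpowOneSubExpSq]
  ring

lemma integral_Ioi_eq_zero {p : ℝ} (hp₂ : -2 < p) (hp₀ : p < 0) :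
    ∫ s in Ioi 0, rpowOneSubExpSqDeriv p s = 0 := by
  rw [integral_Ioi_of_hasDerivAt_of_tendsto (rpowOneSubExpSq.continuousWithinAt_zero hp₂)
    (fun s hs => rpowOneSubExpSq.hasDerivAt p hs) (integrableOn_Ioi hp₂ hp₀)
    (rpowOneSubExpSq.tendsto_atTop hp₀), rpowOneSubExpSq.apply_zero, sub_zero]

-- The product rule for `s ^ (-α) * rpowOneSubExpSq p s = rpowOneSubExpSq (p - α) s`.
lemma rpow_neg_mul_eq (p α : ℝ) {s : ℝ} (hs : 0 < s) :
    s ^ (-α) * rpowOneSubExpSqDeriv p s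
      = rpowOneSubExpSqDeriv (p - α) s + α * rpowOneSubExpSq (p - α - 1) s := by
  have h₁ : s ^ (-α) * s ^ (p - 1) = s ^ (p - α - 1) := by rw [← rpow_add hs]; ring_nf
  have h₂ : s ^ (-α) * s ^ p = s ^ (p - α) := by rw [← rpow_add hs]; ring_nf
  simp only [rpowOneSubExpSqDeriv, rpowOneSubExpSq]
  linear_combination (p * (1 - exp (-s)) ^ 2) * h₁ + (2 * ((1 - exp (-s)) * exp (-s))) * h₂

lemma integrableOn_rpow_neg_mul {p α : ℝ} (h₂ : -2 < p - α) (h₀ : p - α < 0) :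
    IntegrableOn (fun s => s ^ (-α) * rpowOneSubExpSqDeriv p s) (Ioi 0) :=
  ((integrableOn_Ioi h₂ h₀).add ((rpowOneSubExpSq.integrableOn_Ioi (by linarith)
    (by linarith)).const_mul α)).congr_fun (fun _ hs => (rpow_neg_mul_eq p α hs).symm)
    measurableSet_Ioi

lemma integral_rpow_neg_mul {p α : ℝ} (h₂ : -2 < p - α) (h₀ : p - α < 0) :
    ∫ s in Ioi 0, s ^ (-α) * rpowOneSubExpSqDeriv p s
      = α * ∫ s in Ioi 0, rpowOneSubExpSq (p - α - 1) s := by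
  rw [setIntegral_congr_fun measurableSet_Ioi (fun _ hs => rpow_neg_mul_eq p α hs),
    integral_add (integrableOn_Ioi h₂ h₀) ((rpowOneSubExpSq.integrableOn_Ioi (by linarith)
    (by linarith)).const_mul α), integral_Ioi_eq_zero h₂ h₀, integral_const_mul, zero_add]

end rpowOneSubExpSqDeriv

section TailIntegral

variable {μ : Measure ℝ} [IsFiniteMeasure μ]

lemma antitone_measureReal_Ioi : Antitone fun u : ℝ => μ.real (Ioi u) :=
  fun _ _ h => measureReal_mono (Ioi_subset_Ioi h)

lemma integral_eq_setIntegral_deriv_mul_measureReal_Ioi (hμ : μ (Iic 0) = 0)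
    {f f' : ℝ → ℝ} (hf : ∀ x ∈ Ioi 0, HasDerivAt f (f' x) x)
    (hf_zero : ContinuousWithinAt f (Ici 0) 0) (hf₀ : f 0 = 0)
    (hf_top : Tendsto f atTop (𝓝 0)) (hf' : IntegrableOn f' (Ioi 0)) :
    ∫ t, f t ∂μ = ∫ s in Ioi 0, f' s * μ.real (Ioi s) := by
  have hf'_zero : ∫ s in Ioi 0, f' s = 0 := by
    rw [integral_Ioi_of_hasDerivAt_of_tendsto hf_zero hf hf' hf_top, hf₀, sub_zero]
  -- `f t = ∫_{s ≥ t} -f' s`, then swap the order of integration.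
  let F : ℝ → ℝ → ℝ := fun t => (Ici t).indicator fun s => -f' s
  have hF : Integrable (Function.uncurry F) (μ.prod (volume.restrict (Ioi 0))) :=
    (hf'.neg.comp_snd μ).indicator (measurableSet_le measurable_fst measurable_snd)
  have h_inner_s : ∀ᵐ t ∂μ, ∫ s in Ioi 0, F t s = f t := by
    filter_upwards [measure_eq_zero_iff_ae_notMem.mp hμ] with t (ht : ¬ t ≤ 0)
    have ht : 0 < t := not_le.mp ht
    rw [integral_indicator measurableSet_Ici, Measure.restrict_restrict measurableSet_Ici,
      inter_eq_left.mpr (Ici_subset_Ioi.mpr ht), integral_Ici_eq_integral_Ioi, integral_neg,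
      integral_Ioi_of_hasDerivAt_of_tendsto (hf t ht).continuousAt.continuousWithinAt
        (fun x hx => hf x (ht.trans hx)) (hf'.mono_set (Ioi_subset_Ioi ht.le)) hf_top]
    ring
  have h_inner_t : ∀ s, ∫ t, F t s ∂μ = (μ.real univ - μ.real (Ioi s)) * -f' s := by
    intro s
    rw [← measureReal_compl measurableSet_Ioi, compl_Ioi, ← smul_eq_mul,
      ← integral_indicator_const _ measurableSet_Iic]
    rfl
  have hG : Integrable (fun s => f' s * μ.real (Ioi s)) (volume.restrict (Ioi 0)) :=
    hf'.mul_bdd antitone_measureReal_Ioi.measurable.aestronglyMeasurable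
      (ae_of_all _ fun s => by
        rw [norm_of_nonneg measureReal_nonneg]
        exact measureReal_mono (subset_univ _))
  calc ∫ t, f t ∂μ = ∫ t, (∫ s in Ioi 0, F t s) ∂μ := (integral_congr_ae h_inner_s).symm
    _ = ∫ s in Ioi 0, (μ.real univ - μ.real (Ioi s)) * -f' s := by
      rw [integral_integral_swap hF]
      exact integral_congr_ae (ae_of_all _ h_inner_t)
    _ = ∫ s in Ioi 0, (f' s * μ.real (Ioi s) - μ.real univ * f' s) := by
      congr 1 with s; ring
    _ = ∫ s in Ioi 0, f' s * μ.real (Ioi s) := by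
      rw [integral_sub hG (hf'.const_mul _), integral_const_mul, hf'_zero, mul_zero, sub_zero]

lemma exists_forall_rpow_mul_measureReal_Ioi_le {α c : ℝ} (hα : 0 ≤ α)
    (htail : Tendsto (fun u => u ^ α * μ.real (Ioi u)) atTop (𝓝 c)) :
    ∃ M, ∀ u, 0 ≤ u → u ^ α * μ.real (Ioi u) ≤ M := by
  obtain ⟨U, hU⟩ := eventually_atTop.mp (htail.eventually (eventually_le_nhds (lt_add_one c)))
  refine ⟨max (U ^ α * μ.real univ) (c + 1), fun u hu => ?_⟩
  rcases le_or_gt u U with huU | hUu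
  · exact le_max_of_le_left (mul_le_mul (rpow_le_rpow hu huU hα)
      (measureReal_mono (subset_univ _)) measureReal_nonneg (rpow_nonneg (hu.trans huU) α))
  · exact le_max_of_le_right (hU u hUu.le)

theorem tendsto_rpow_neg_mul_integral_comp_const_mul {α c : ℝ} (hα : 0 ≤ α)
    (hμ : μ (Iic 0) = 0) (htail : Tendsto (fun u => u ^ α * μ.real (Ioi u)) atTop (𝓝 c))
    {f f' : ℝ → ℝ} (hf : ∀ x ∈ Ioi 0, HasDerivAt f (f' x) x)
    (hf_zero : ContinuousWithinAt f (Ici 0) 0) (hf₀ : f 0 = 0)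
    (hf_top : Tendsto f atTop (𝓝 0)) (hf' : IntegrableOn f' (Ioi 0))
    (hf'_rpow : IntegrableOn (fun s => s ^ (-α) * f' s) (Ioi 0)) :
    Tendsto (fun ε => ε ^ (-α) * ∫ t, f (ε * t) ∂μ) (𝓝[>] 0)
      (𝓝 (c * ∫ s in Ioi 0, s ^ (-α) * f' s)) := by
  obtain ⟨M, hM⟩ := exists_forall_rpow_mul_measureReal_Ioi_le hα htail
  have h_rescale : ∀ ε : ℝ, 0 < ε → ε ^ (-α) * ∫ t, f (ε * t) ∂μ =
      ∫ s in Ioi 0, s ^ (-α) * f' s * ((s / ε) ^ α * μ.real (Ioi (s / ε))) := by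
    intro ε hε
    have hmeas : Measurable (ε * ·) := measurable_const_mul ε
    have hμε : μ.map (ε * ·) (Iic 0) = 0 := by
      rwa [Measure.map_apply hmeas measurableSet_Iic, preimage_const_mul_Iic₀ _ hε, zero_div]
    have h_map : ∫ t, f (ε * t) ∂μ = ∫ x, f x ∂(μ.map (ε * ·)) :=
      ((Homeomorph.mulLeft₀ ε hε.ne').measurableEmbedding.integral_map f).symm
    rw [h_map, integral_eq_setIntegral_deriv_mul_measureReal_Ioi hμε hf hf_zero hf₀ hf_top hf',
      ← integral_const_mul]
    refine setIntegral_congr_fun measurableSet_Ioi fun s (hs : 0 < s) => ?_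
    rw [map_measureReal_apply hmeas measurableSet_Ioi, preimage_const_mul_Ioi₀ _ hε,
      div_rpow hs.le hε.le, rpow_neg hs.le, rpow_neg hε.le]
    field_simp [(rpow_pos_of_pos hs α).ne']
  have h_lim : ∫ s in Ioi 0, s ^ (-α) * f' s * c = c * ∫ s in Ioi 0, s ^ (-α) * f' s := by
    rw [integral_mul_const, mul_comm]
  rw [← h_lim]
  refine Tendsto.congr' (eventually_nhdsWithin_of_forall fun ε hε => (h_rescale ε hε).symm) ?_
  refine tendsto_integral_filter_of_dominated_convergence (fun s => ‖s ^ (-α) * f' s‖ * M)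
    ?_ ?_ (hf'_rpow.norm.mul_const M) ?_
  · refine eventually_nhdsWithin_of_forall fun ε hε => hf'_rpow.aestronglyMeasurable.mul ?_
    exact ((measurable_id.div_const ε).pow_const α).mul
      (antitone_measureReal_Ioi.measurable.comp (measurable_id.div_const ε))
      |>.aestronglyMeasurable
  · refine eventually_nhdsWithin_of_forall fun ε (hε : 0 < ε) => ?_
    filter_upwards [ae_restrict_mem measurableSet_Ioi] with s (hs : 0 < s)
    have hsε : 0 ≤ s / ε := div_nonneg hs.le hε.le
    rw [norm_mul, norm_of_nonneg (mul_nonneg (rpow_nonneg hsε α) measureReal_nonneg)]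
    exact mul_le_mul_of_nonneg_left (hM _ hsε) (norm_nonneg _)
  · filter_upwards [ae_restrict_mem measurableSet_Ioi] with s (hs : 0 < s)
    have h_div : Tendsto (fun ε => s / ε) (𝓝[>] 0) atTop := by
      simpa only [div_eq_mul_inv] using tendsto_inv_nhdsGT_zero.const_mul_atTop hs
    exact (htail.comp h_div).const_mul _

end TailIntegral

theorem stmt_8_general (α β c : ℝ) (hα : 0 < α) (hβ : 0 < β) (hαβ : α + 2 * β < 2)
    (ν : Measure ℝ) [IsProbabilityMeasure ν]
    (hsupp : ν (Set.Iio 1) = 0)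
    (htail : Tendsto (fun u : ℝ => u ^ α * (ν {t : ℝ | u < t}).toReal)
      atTop (nhds c)) :
    IntegrableOn (fun t : ℝ => t ^ (-1 - α - 2*β) * (1 - Real.exp (-t)) ^ 2)
        (Set.Ioi 0) volume ∧
      Tendsto (fun ε : ℝ =>
          ε ^ (-(α + 2*β)) * ∫ t, t ^ (-2*β) * (1 - Real.exp (-(ε * t))) ^ 2 ∂ν)
        (nhdsWithin 0 (Set.Ioi 0))
        (nhds (c * α * ∫ t in Set.Ioi (0:ℝ),
          t ^ (-1 - α - 2*β) * (1 - Real.exp (-t)) ^ 2)) := by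
  have hν : ν (Iic 0) = 0 := measure_mono_null (Iic_subset_Iio.mpr one_pos) hsupp
  have hlim := tendsto_rpow_neg_mul_integral_comp_const_mul hα.le hν htail
    (fun x hx => rpowOneSubExpSq.hasDerivAt (-2 * β) hx)
    (rpowOneSubExpSq.continuousWithinAt_zero (by linarith)) (rpowOneSubExpSq.apply_zero _)
    (rpowOneSubExpSq.tendsto_atTop (by linarith))
    (rpowOneSubExpSqDeriv.integrableOn_Ioi (by linarith) (by linarith))
    (rpowOneSubExpSqDeriv.integrableOn_rpow_neg_mul (by linarith) (by linarith))
  rw [rpowOneSubExpSqDeriv.integral_rpow_neg_mul (by linarith) (by linarith), ← mul_assoc,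
    show -2 * β - α - 1 = -1 - α - 2 * β by ring] at hlim
  refine ⟨rpowOneSubExpSq.integrableOn_Ioi (by linarith) (by linarith), hlim.congr' ?_⟩
  filter_upwards [self_mem_nhdsWithin] with ε (hε : 0 < ε)
  have h_scale : ∀ᵐ t ∂ν, rpowOneSubExpSq (-2 * β) (ε * t)
      = ε ^ (-2 * β) * (t ^ (-2 * β) * (1 - exp (-(ε * t))) ^ 2) := by
    filter_upwards [measure_eq_zero_iff_ae_notMem.mp hν] with t ht
    exact rpowOneSubExpSq.apply_const_mul _ hε.le (not_le.mp ht).le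
  rw [integral_congr_ae h_scale, integral_const_mul, ← mul_assoc, ← rpow_add hε]
  ring_nf

/-- Abelian-type asymptotics for the second moment
`∫ t^{-2β}(1 - e^{-εt})² dν(t)` when the law `ν` of the trap depth has a
regularly varying tail of index `α`:
`ε^{-(α+2β)} ∫ t^{-2β}(1-e^{-εt})² dν → cα ∫₀^∞ t^{-1-α-2β}(1-e^{-t})² dt`,
the latter integral being finite. -/
theorem stmt_8 (α β c : ℝ) (hα : 0 < α) (hβ : 0 < β) (hαβ : α + 2 * β < 2)
    (hc : 0 < c)
    (ν : Measure ℝ) [IsProbabilityMeasure ν]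
    (hsupp : ν (Set.Iio 1) = 0)
    (htail : Tendsto (fun u : ℝ => u ^ α * (ν {t : ℝ | u < t}).toReal)
      atTop (nhds c)) :
    IntegrableOn (fun t : ℝ => t ^ (-1 - α - 2*β) * (1 - Real.exp (-t)) ^ 2)
        (Set.Ioi 0) volume ∧
      Tendsto (fun ε : ℝ =>
          ε ^ (-(α + 2*β)) * ∫ t, t ^ (-2*β) * (1 - Real.exp (-(ε * t))) ^ 2 ∂ν)
        (nhdsWithin 0 (Set.Ioi 0))
        (nhds (c * α * ∫ t in Set.Ioi (0:ℝ),
          t ^ (-1 - α - 2*β) * (1 - Real.exp (-t)) ^ 2)) :=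
  stmt_8_general α β c hα hβ hαβ ν hsupp htail
end

section
/- Let (ν_ε)_{ε>0} be a family of probability measures on (0,∞) with finite second moments, and let q : (0,∞) → (0,∞). Assume that ε^{-1}·q(ε)·∫ t dν_ε(t) → 1 and ε^{-1}·q(ε)²·∫ t² dν_ε(t) → 0 as ε → 0+. Then for every λ ≥ 0, lim_{ε→0+} ε^{-1}·(1 - ∫ e^{-q(ε)·λ·t} dν_ε(t)) = λ. -/
open Filter Real MeasureTheory

/-!
Write `s = q(ε) λ`. For `x ≥ 0` one has `0 ≤ e^{-x} - 1 + x ≤ x²/2`, so integrating against a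
probability measure on `[0, ∞)` gives `1 - ν̂(s) = s ∫ t dν - R` with `0 ≤ R ≤ (s²/2) ∫ t² dν`.
After multiplying by `ε⁻¹`, the main term tends to `λ` by the first-moment hypothesis and the
remainder is at most `(λ²/2) ε⁻¹ q(ε)² ∫ t² dν_ε → 0`.
-/

namespace Real

lemma exp_neg_le_one_sub_add_sq_div_two {x : ℝ} (hx : 0 ≤ x) :
    exp (-x) ≤ 1 - x + x ^ 2 / 2 := by
  -- `(1 + x + x²/2) (1 - x + x²/2) = 1 + x⁴/4 ≥ 1`
  have hquad := quadratic_le_exp_of_nonneg hx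
  have hinv : exp (-x) * exp x = 1 := by rw [← exp_add, neg_add_cancel, exp_zero]
  nlinarith [exp_pos (-x), sq_nonneg (x ^ 2)]

lemma abs_exp_neg_sub_one_add_le {x : ℝ} (hx : 0 ≤ x) : |exp (-x) - 1 + x| ≤ x ^ 2 / 2 :=
  abs_le.2 ⟨by linarith [one_sub_le_exp_neg x, sq_nonneg x],
    by linarith [exp_neg_le_one_sub_add_sq_div_two hx]⟩

end Real

section LaplaceTransform

variable {μ : Measure ℝ} [IsProbabilityMeasure μ]

lemma integrable_exp_neg_mul (h0 : ∀ᵐ t ∂μ, 0 ≤ t) {s : ℝ} (hs : 0 ≤ s) :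
    Integrable (fun t => exp (-(s * t))) μ := by
  refine Integrable.of_bound (by fun_prop) 1 ?_
  filter_upwards [h0] with t ht
  rw [norm_of_nonneg (exp_pos _).le, exp_le_one_iff, neg_nonpos]
  positivity

lemma abs_one_sub_integral_exp_neg_sub_le (h0 : ∀ᵐ t ∂μ, 0 ≤ t)
    (h2 : Integrable (fun t => t ^ 2) μ) {s : ℝ} (hs : 0 ≤ s) :
    |1 - ∫ t, exp (-(s * t)) ∂μ - s * ∫ t, t ∂μ| ≤ s ^ 2 / 2 * ∫ t, t ^ 2 ∂μ := by
  have h1 : Integrable (fun t => t) μ :=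
    ((memLp_two_iff_integrable_sq aestronglyMeasurable_id).2 h2).integrable one_le_two
  have hsplit : ∫ t, (exp (-(s * t)) - 1 + s * t) ∂μ
      = ∫ t, exp (-(s * t)) ∂μ - 1 + s * ∫ t, t ∂μ := by
    have hexp := integrable_exp_neg_mul h0 hs
    rw [integral_add (f := fun t => exp (-(s * t)) - 1) (hexp.sub (integrable_const 1))
      (h1.const_mul s), integral_sub hexp (integrable_const 1), integral_const_mul]
    simp
  have hbound : ‖∫ t, (exp (-(s * t)) - 1 + s * t) ∂μ‖ ≤ ∫ t, s ^ 2 / 2 * t ^ 2 ∂μ := by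
    refine norm_integral_le_of_norm_le (h2.const_mul _) ?_
    filter_upwards [h0] with t ht
    have := abs_exp_neg_sub_one_add_le (mul_nonneg hs ht)
    rw [norm_eq_abs]
    linarith [mul_pow s t 2]
  rw [hsplit, norm_eq_abs, integral_const_mul] at hbound
  rw [← abs_neg]
  convert hbound using 2
  ring

end LaplaceTransform

/-- Deterministic core of the convergence criterion to the FIN diffusion:
if `ε⁻¹ q(ε) ∫ t dν_ε → 1` and `ε⁻¹ q(ε)² ∫ t² dν_ε → 0` as `ε → 0⁺`, then
`Ψ_ε(ν_ε)(λ) = ε⁻¹ (1 - ν̂_ε(q(ε)λ)) → λ` for every `λ ≥ 0`. -/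
theorem stmt_13 (ν : ℝ → Measure ℝ) (hprob : ∀ ε, IsProbabilityMeasure (ν ε))
    (hsupp : ∀ ε, (ν ε) (Set.Ioi 0)ᶜ = 0)
    (hm2 : ∀ ε, Integrable (fun t : ℝ => t ^ 2) (ν ε))
    (q : ℝ → ℝ) (hq : ∀ ε : ℝ, 0 < ε → 0 < q ε)
    (hmean : Tendsto (fun ε : ℝ => ε⁻¹ * q ε * ∫ t, t ∂(ν ε))
      (nhdsWithin 0 (Set.Ioi 0)) (nhds 1))
    (hsecond : Tendsto (fun ε : ℝ => ε⁻¹ * q ε ^ 2 * ∫ t, t ^ 2 ∂(ν ε))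
      (nhdsWithin 0 (Set.Ioi 0)) (nhds 0)) :
    ∀ lam : ℝ, 0 ≤ lam →
      Tendsto (fun ε : ℝ =>
          ε⁻¹ * (1 - ∫ t, Real.exp (-(q ε * lam * t)) ∂(ν ε)))
        (nhdsWithin 0 (Set.Ioi 0)) (nhds lam) := by
  intro lam hlam
  have hpos : ∀ ε, ∀ᵐ t ∂(ν ε), 0 ≤ t := fun ε => by
    filter_upwards [mem_ae_iff.2 (hsupp ε)] with t ht using le_of_lt ht
  have herror : Tendsto (fun ε : ℝ => ε⁻¹ * (1 - ∫ t, exp (-(q ε * lam * t)) ∂(ν ε))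
      - lam * (ε⁻¹ * q ε * ∫ t, t ∂(ν ε))) (nhdsWithin 0 (Set.Ioi 0)) (nhds 0) := by
    refine squeeze_zero_norm' ?_ (by simpa using hsecond.const_mul (lam ^ 2 / 2))
    filter_upwards [self_mem_nhdsWithin] with ε (hε : 0 < ε)
    have := abs_one_sub_integral_exp_neg_sub_le (μ := ν ε) (hpos ε) (hm2 ε)
      (mul_nonneg (hq ε hε).le hlam)
    calc ‖ε⁻¹ * (1 - ∫ t, exp (-(q ε * lam * t)) ∂(ν ε)) - lam * (ε⁻¹ * q ε * ∫ t, t ∂(ν ε))‖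
        = |ε⁻¹ * (1 - ∫ t, exp (-(q ε * lam * t)) ∂(ν ε) - q ε * lam * ∫ t, t ∂(ν ε))| := by
          rw [norm_eq_abs]; ring_nf
      _ = ε⁻¹ * |1 - ∫ t, exp (-(q ε * lam * t)) ∂(ν ε) - q ε * lam * ∫ t, t ∂(ν ε)| := by
          rw [abs_mul, abs_of_pos (inv_pos.2 hε)]
      _ ≤ ε⁻¹ * ((q ε * lam) ^ 2 / 2 * ∫ t, t ^ 2 ∂(ν ε)) := by gcongr
      _ = lam ^ 2 / 2 * (ε⁻¹ * q ε ^ 2 * ∫ t, t ^ 2 ∂(ν ε)) := by ring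
  simpa using herror.add (hmean.const_mul lam)
end

section
/- Define χ(ε,g) = (1 + √(1 - e^{-2ε}(1 - g²))) / (e^{-ε}(1 + g)) for ε > 0 and g ∈ (0,1). If (ε_n) and (g_n) are sequences in (0,1) with ε_n → 0, g_n → 0 and ε_n/g_n² → 0, then lim_{n→∞} (χ(ε_n, g_n) - 1) · g_n / ε_n = 1. -/
open Filter Real Topology

/-! With `s = e^{-ε}` and `a = √(1 - s²(1 - g²))`, the identity `a² - s²g² = 1 - s²` rationalises
`χ - 1 = ((1 - s) + (a - s g)) / (s (1 + g))` into
`(χ - 1) g / ε = ((1 - s)/ε · g + (1 - s²)/ε / (a/g + s)) / (s (1 + g))`.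
As `ε → 0` we have `(1 - s)/ε → 1` and `(1 - s²)/ε → 2`, while `ε ≪ g²` gives
`(a/g)² = (1 - s²)/g² + s² → 1`; so the right-hand side tends to `(0 + 2/2) / 1 = 1`. -/

theorem tendsto_one_sub_exp_neg_div_self :
    Tendsto (fun x : ℝ => (1 - exp (-x)) / x) (𝓝[≠] 0) (𝓝 1) := by
  have hderiv : HasDerivAt (fun x => exp (-x)) (-1) 0 := by
    simpa using (hasDerivAt_neg 0).exp
  have h := (hasDerivAt_iff_tendsto_slope.mp hderiv).neg
  rw [neg_neg] at h
  refine h.congr fun x => ?_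
  simp only [slope_fun_def, neg_zero, exp_zero, sub_zero, vsub_eq_sub, smul_eq_mul]
  ring

theorem chi_sub_one_mul_div_eq {s g ε : ℝ} (hs : 0 < s) (hs1 : s ≤ 1) (hg : 0 < g)
    (hε : ε ≠ 0) :
    ((1 + √(1 - s ^ 2 * (1 - g ^ 2))) / (s * (1 + g)) - 1) * g / ε =
      ((1 - s) / ε * g + (1 - s ^ 2) / ε / (√(1 - s ^ 2 * (1 - g ^ 2)) / g + s)) /
        (s * (1 + g)) := by
  set a := √(1 - s ^ 2 * (1 - g ^ 2))
  have hD : 0 ≤ 1 - s ^ 2 * (1 - g ^ 2) := by nlinarith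
  have hasg : 0 < a + s * g := by positivity
  have hdiv : a / g + s = (a + s * g) / g := by field_simp
  have hrat : 1 - s ^ 2 = (a - s * g) * (a + s * g) := by
    linear_combination (sq_sqrt hD).symm
  rw [hdiv, hrat]
  field_simp
  ring

theorem tendsto_sqrt_one_sub_sq_mul_div {α : Type*} {l : Filter α} {s g : α → ℝ}
    (hg : ∀ x, 0 < g x) (hs : Tendsto s l (𝓝 1))
    (hsg : Tendsto (fun x => (1 - s x ^ 2) / g x ^ 2) l (𝓝 0)) :
    Tendsto (fun x => √(1 - s x ^ 2 * (1 - g x ^ 2)) / g x) l (𝓝 1) := by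
  have hinner : Tendsto (fun x => (1 - s x ^ 2) / g x ^ 2 + s x ^ 2) l (𝓝 1) := by
    simpa using hsg.add (hs.pow 2)
  have h : Tendsto (fun x => √((1 - s x ^ 2) / g x ^ 2 + s x ^ 2)) l (𝓝 1) := by
    simpa using hinner.sqrt
  refine h.congr fun x => ?_
  rw [← sqrt_sq (hg x).le, ← sqrt_div' _ (sq_nonneg _), sqrt_sq (hg x).le]
  congr 1
  field_simp [(hg x).ne']
  ring

/-- The asymptotic `χ - 1 ~ ε/g` in the regime `ε ≪ g² ≪ 1` for the larger
root `χ(ε,g) = (1 + √(1 - e^{-2ε}(1-g²)))/(e^{-ε}(1+g))` of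
`s p λ² - λ + s(1-p) = 0`, with `s = e^{-ε}` and `p = (1+g)/2`. -/
theorem stmt_14 (χ : ℝ → ℝ → ℝ)
    (hχ : ∀ ε g : ℝ, χ ε g =
      (1 + Real.sqrt (1 - Real.exp (-2 * ε) * (1 - g ^ 2))) /
        (Real.exp (-ε) * (1 + g)))
    (ε g : ℕ → ℝ)
    (hε : ∀ n, ε n ∈ Set.Ioo (0:ℝ) 1) (hg : ∀ n, g n ∈ Set.Ioo (0:ℝ) 1)
    (hε0 : Tendsto ε atTop (nhds 0)) (hg0 : Tendsto g atTop (nhds 0))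
    (hratio : Tendsto (fun n => ε n / g n ^ 2) atTop (nhds 0)) :
    Tendsto (fun n => (χ (ε n) (g n) - 1) * g n / ε n) atTop (nhds 1) := by
  set s : ℕ → ℝ := fun n => exp (-ε n)
  have hs : Tendsto s atTop (𝓝 1) := by simpa using hε0.neg.rexp
  have hε0' : Tendsto ε atTop (𝓝[≠] 0) :=
    tendsto_nhdsWithin_of_tendsto_nhds_of_eventually_within _ hε0
      (Eventually.of_forall fun n => (hε n).1.ne')
  have hu : Tendsto (fun n => (1 - s n) / ε n) atTop (𝓝 1) :=
    tendsto_one_sub_exp_neg_div_self.comp hε0'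
  have hv : Tendsto (fun n => (1 - s n ^ 2) / ε n) atTop (𝓝 2) := by
    have h : Tendsto (fun n => (1 - s n) / ε n * (1 + s n)) atTop (𝓝 2) := by
      simpa [one_add_one_eq_two] using hu.mul (hs.const_add 1)
    exact h.congr fun n => by ring
  have hr := tendsto_sqrt_one_sub_sq_mul_div (fun n => (hg n).1) hs <| by
    have h : Tendsto (fun n => (1 - s n ^ 2) / ε n * (ε n / g n ^ 2)) atTop (𝓝 0) := by
      simpa using hv.mul hratio
    exact h.congr fun n => by field_simp [(hε n).1.ne']
  have hlim := ((hu.mul hg0).add (hv.div (hr.add hs) (by norm_num))).div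
    (hs.mul (hg0.const_add 1)) (by norm_num)
  norm_num at hlim
  refine hlim.congr fun n => ?_
  have hs2 : exp (-2 * ε n) = s n ^ 2 := by rw [← exp_nat_mul]; ring_nf
  have hs1 : s n ≤ 1 := exp_le_one_iff.mpr (neg_nonpos.mpr (hε n).1.le)
  rw [Pi.div_apply, hχ, hs2, chi_sub_one_mul_div_eq (exp_pos _) hs1 (hg n).1 (hε n).1.ne']
end
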